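/- arXiv:1204.4716 — 2 statements merged into one kernel-verified Lean document; each statement's English description precedes it below -/
import Mathlib

section
/- Let F be a field and a_1, ..., a_n, b_1, ..., b_n ∈ F be such that a_i + b_j ≠ 0 for all i, j. Then the determinant of the n×n matrix whose (i,j) entry is 1/(a_i + b_j) equals [∏_{1 ≤ i < j ≤ n} (a_j − a_i)(b_j − b_i)] / [∏_{i=1}^n ∏_{j=1}^n (a_i + b_j)]. -/
/-!
Pivoting on the `(0, 0)` entry, the Schur complement of a Cauchy matrix is again a Cauchy
matrix, in the remaining variables, with its rows and columns rescaled: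
`1/(aᵢ+bⱼ) - (a₀+b₀)/((aᵢ+b₀)(a₀+bⱼ)) = (aᵢ-a₀)(bⱼ-b₀) / ((aᵢ+b₀)(a₀+bⱼ)(aᵢ+bⱼ))`.
So one pivoting step splits off exactly the factors of the formula that involve the index `0`,
and induction on `n` does the rest.
-/

open Finset

namespace Fin

variable {M : Type*} [CommMonoid M]

theorem prod_univ_prod_Ioi_succ {n : ℕ} (f : Fin (n + 1) → Fin (n + 1) → M) :
    ∏ i, ∏ j ∈ Ioi i, f i j =
      (∏ j : Fin n, f 0 j.succ) * ∏ i : Fin n, ∏ j ∈ Ioi i, f i.succ j.succ := by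
  rw [prod_univ_succ, prod_Ioi_zero]
  simp_rw [prod_Ioi_succ]

theorem prod_univ_prod_univ_succ {n : ℕ} (f : Fin (n + 1) → Fin (n + 1) → M) :
    ∏ i, ∏ j, f i j = f 0 0 * (∏ j : Fin n, f 0 j.succ) * (∏ i : Fin n, f i.succ 0) *
      ∏ i : Fin n, ∏ j : Fin n, f i.succ j.succ := by
  simp only [prod_univ_succ (n := n), prod_mul_distrib]
  ac_rfl

end Fin

namespace Matrix

variable {K : Type*} [Field K]

theorem det_succ_eq_mul_det_schur {n : ℕ} (M : Matrix (Fin (n + 1)) (Fin (n + 1)) K)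
    (hM : M 0 0 ≠ 0) :
    M.det = M 0 0 *
      (of fun i j : Fin n => M i.succ j.succ - M i.succ 0 * M 0 j.succ / M 0 0).det := by
  let c : Fin (n + 1) → K := Fin.cases 0 fun i => M i.succ 0 / M 0 0
  let B : Matrix (Fin (n + 1)) (Fin (n + 1)) K := of fun i j => M i j - c i * M 0 j
  have hB : M.det = B.det :=
    det_eq_of_forall_row_eq_smul_add_const c 0 rfl fun i j => by
      refine Fin.cases ?_ (fun i => ?_) i <;> simp [B, c]
  have hB_col : ∀ i : Fin n, B i.succ 0 = 0 := fun i => by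
    simp [B, c, div_mul_cancel₀ _ hM]
  rw [hB, det_succ_column_zero, Fin.sum_univ_succ]
  simp only [hB_col, mul_zero, zero_mul, sum_const_zero, add_zero]
  congr 2
  · simp [B, c]
  · ext i j
    simp [B, c, div_mul_eq_mul_div]

def cauchy {m n : Type*} (a : m → K) (b : n → K) : Matrix m n K :=
  of fun i j => (a i + b j)⁻¹

theorem cauchy_schur_entry {a a₀ b b₀ : K} (hab : a + b ≠ 0) (hab₀ : a + b₀ ≠ 0)
    (ha₀b : a₀ + b ≠ 0) :
    (a + b)⁻¹ - (a + b₀)⁻¹ * (a₀ + b)⁻¹ / (a₀ + b₀)⁻¹ =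
      (a - a₀) / (a + b₀) * ((b - b₀) / (a₀ + b) * (a + b)⁻¹) := by
  field_simp
  ring

theorem det_cauchy_succ {n : ℕ} (a b : Fin (n + 1) → K) (hab : ∀ i j, a i + b j ≠ 0) :
    (cauchy a b).det = (a 0 + b 0)⁻¹ * ((∏ i : Fin n, (a i.succ - a 0) / (a i.succ + b 0)) *
      ((∏ j : Fin n, (b j.succ - b 0) / (a 0 + b j.succ)) *
        (cauchy (Fin.tail a) (Fin.tail b)).det)) := by
  rw [det_succ_eq_mul_det_schur _ (inv_ne_zero (hab 0 0)), ← det_mul_row, ← det_mul_column]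
  congr 2
  ext i j
  exact cauchy_schur_entry (hab _ _) (hab _ _) (hab _ _)

end Matrix

/-- Cauchy's double alternant (1841): if `a i + b j ≠ 0` for all `i, j`, then
`det (1/(a i + b j)) = ∏_{i<j} (a j - a i)(b j - b i) / ∏_{i,j} (a i + b j)`. -/
theorem cauchy_determinant {F : Type*} [Field F] {n : ℕ} (a b : Fin n → F)
    (hab : ∀ i j : Fin n, a i + b j ≠ 0) :
    (Matrix.of fun i j : Fin n => (a i + b j)⁻¹).det =
      (∏ i : Fin n, ∏ j ∈ Finset.Ioi i, (a j - a i) * (b j - b i)) /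
        ∏ i : Fin n, ∏ j : Fin n, (a i + b j) := by
  induction n with
  | zero => simp
  | succ n ih =>
    change (Matrix.cauchy a b).det = _
    rw [Matrix.det_cauchy_succ a b hab,
      show (Matrix.cauchy (Fin.tail a) (Fin.tail b)).det = _ from ih _ _ fun i j => hab _ _,
      Fin.prod_univ_prod_Ioi_succ, Fin.prod_univ_prod_univ_succ]
    simp only [Fin.tail, div_eq_mul_inv, mul_inv, prod_mul_distrib, prod_inv_distrib]
    ring
end

section
/- Let F be a field and let f be a polynomial in n variables X_1, ..., X_n over F. If for every pair of indices i < j the polynomial obtained from f by substituting X_i for X_j is zero, then the difference-product ∏_{1 ≤ i < j ≤ n} (X_j − X_i) divides f in F[X_1, ..., X_n]. -/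
/-!
Substituting `X i` for `X j` is an algebra map into a domain whose kernel is the ideal generated by
`X j - X i`, since `f ≡ f(X j := X i)` modulo `X j - X i`. Hence each `X j - X i` is prime and, by the
vanishing hypothesis, divides `f`. Applying the same substitution shows that distinct factors
`X j - X i` (`i < j`) do not divide one another, so they are pairwise relatively prime and their
product divides `f`.
-/

namespace MvPolynomial

variable {σ R : Type*} [CommRing R]

theorem dvd_sub_aeval_self {d : MvPolynomial σ R} {g : σ → MvPolynomial σ R}
    (hg : ∀ k, d ∣ X k - g k) (f : MvPolynomial σ R) : d ∣ f - aeval g f := by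
  have hquot : (Ideal.Quotient.mkₐ R (Ideal.span {d})).comp (aeval g) =
      Ideal.Quotient.mkₐ R (Ideal.span {d}) := by
    ext k
    simpa [Ideal.Quotient.eq, Ideal.mem_span_singleton, dvd_sub_comm] using hg k
  rw [← Ideal.mem_span_singleton, ← Ideal.Quotient.eq]
  exact (AlgHom.congr_fun hquot f).symm

variable [DecidableEq σ]

theorem X_sub_X_dvd_sub_rename (i j : σ) (f : MvPolynomial σ R) :
    X j - X i ∣ f - rename (fun k => if k = j then i else k) f := by
  rw [rename_eq_aeval]
  exact dvd_sub_aeval_self (fun k => by by_cases hk : k = j <;> simp [hk]) f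

theorem ker_rename_eq_span_X_sub_X (i j : σ) :
    RingHom.ker (rename (fun k => if k = j then i else k) : MvPolynomial σ R →ₐ[R] _) =
      Ideal.span {X j - X i} := by
  ext f
  rw [RingHom.mem_ker, Ideal.mem_span_singleton]
  constructor
  · intro hf
    simpa [hf] using X_sub_X_dvd_sub_rename i j f
  · rintro ⟨c, rfl⟩
    simp

theorem prime_X_sub_X [IsDomain R] {i j : σ} (hij : i ≠ j) :
    Prime (X j - X i : MvPolynomial σ R) := by
  have hne : (X j - X i : MvPolynomial σ R) ≠ 0 := sub_ne_zero.2 fun h => hij (X_injective h).symm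
  rw [← Ideal.span_singleton_prime hne, ← ker_rename_eq_span_X_sub_X]
  exact RingHom.ker_isPrime _

theorem eq_and_eq_or_of_X_sub_X_dvd [Nontrivial R] {i j k l : σ} (hkl : k ≠ l)
    (h : (X j - X i : MvPolynomial σ R) ∣ X l - X k) : (k = i ∧ l = j) ∨ (k = j ∧ l = i) := by
  rw [← Ideal.mem_span_singleton, ← ker_rename_eq_span_X_sub_X, RingHom.mem_ker, map_sub,
    rename_X, rename_X, sub_eq_zero] at h
  have := X_injective h
  split_ifs at this <;> grind

end MvPolynomial

open MvPolynomial in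
/-- If a polynomial `f` in `n` variables over a field vanishes whenever the
variable `X j` is replaced by `X i` (for every pair `i < j`), then the
difference-product `∏_{i<j} (X j - X i)` divides `f`. -/
theorem differenceProduct_dvd_of_vanishing {F : Type*} [Field F] {n : ℕ}
    (f : MvPolynomial (Fin n) F)
    (hf : ∀ i j : Fin n, i < j →
      (aeval fun k : Fin n => if k = j then (X i : MvPolynomial (Fin n) F) else X k) f = 0) :
    (∏ i : Fin n, ∏ j ∈ Finset.Ioi i, (X j - X i : MvPolynomial (Fin n) F)) ∣ f := by
  have hf' : ∀ i j : Fin n, i < j → rename (fun k => if k = j then i else k) f = 0 := by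
    intro i j hij
    rw [← hf i j hij, rename_eq_aeval, Function.comp_def]
    simp only [apply_ite X]
  rw [Finset.prod_sigma']
  refine Finset.prod_dvd_of_isRelPrime ?_ ?_
  · rintro ⟨i, j⟩ hij ⟨k, l⟩ hkl hne
    simp only [Finset.coe_sigma, Set.mem_sigma_iff, Finset.coe_univ, Set.mem_univ,
      Finset.coe_Ioi, Set.mem_Ioi, true_and] at hij hkl
    refine (prime_X_sub_X hij.ne).irreducible.isRelPrime_iff_not_dvd.2 fun h => hne ?_
    rcases eq_and_eq_or_of_X_sub_X_dvd hkl.ne h with ⟨rfl, rfl⟩ | ⟨rfl, rfl⟩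
    · rfl
    · exact (hij.asymm hkl).elim
  · rintro ⟨i, j⟩ hij
    simp only [Finset.mem_sigma, Finset.mem_univ, Finset.mem_Ioi, true_and] at hij
    simpa [hf' i j hij] using X_sub_X_dvd_sub_rename i j f
end
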